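/- arXiv:2509.09941 — 7 statements merged into one kernel-verified Lean document; each statement's English description precedes it below -/
import Mathlib

section
/- Let $A$ be a commutative ring, $M$ an $A$-module, and $x, y \in A$. If $x$ is a non-zero divisor on $M$, then $y$ is a non-zero divisor on $M/xM$ if and only if $y$ is a non-zero divisor on $M/x^nM$ for every $n \geq 1$. -/
open Pointwise

namespace Submodule

variable {A M : Type*} [CommRing A] [AddCommGroup M] [Module A M]

theorem mem_smul_top_iff_exists_smul_eq {a : A} {m : M} :
    m ∈ a • (⊤ : Submodule A M) ↔ ∃ n : M, a • n = m := by
  simp [mem_smul_pointwise_iff_exists]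

end Submodule

open Submodule in
/-- If `y • m ∈ x ^ (n + 1) M`, then `m = x ^ n • k` by induction, and cancelling the regular
element `x ^ n` from `x ^ n • y • k ∈ x ^ n • x M` puts `y • k` in `x M`, hence `k` as well. -/
theorem IsSMulRegular.quotient_pow_smul_top {A M : Type*} [CommRing A] [AddCommGroup M]
    [Module A M] {x y : A} (hx : IsSMulRegular M x)
    (hy : IsSMulRegular (M ⧸ x • (⊤ : Submodule A M)) y) (n : ℕ) :
    IsSMulRegular (M ⧸ x ^ n • (⊤ : Submodule A M)) y := by
  simp only [isSMulRegular_quotient_iff_mem_of_smul_mem, mem_smul_top_iff_exists_smul_eq]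
    at hy ⊢
  induction n with
  | zero => exact fun m _ => ⟨m, by rw [pow_zero, one_smul]⟩
  | succ n ih =>
    rintro m ⟨m', hm'⟩
    obtain ⟨k, rfl⟩ := ih m ⟨x • m', by rw [← hm', pow_succ, mul_smul]⟩
    have hyk : y • k = x • m' := hx.pow n <| by
      change x ^ n • y • k = x ^ n • x • m'
      rw [smul_comm, ← hm', pow_succ, mul_smul]
    obtain ⟨k', rfl⟩ := hy k ⟨m', hyk.symm⟩
    exact ⟨k', by rw [pow_succ, mul_smul]⟩

theorem stmt1 (A : Type*) [CommRing A] (M : Type*) [AddCommGroup M] [Module A M]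
    (x y : A) (hx : IsSMulRegular M x) :
    IsSMulRegular (M ⧸ (x • (⊤ : Submodule A M))) y ↔
      ∀ n : ℕ, 1 ≤ n → IsSMulRegular (M ⧸ (x ^ n • (⊤ : Submodule A M))) y :=
  ⟨fun hy n _ => hx.quotient_pow_smul_top hy n, fun h => pow_one x ▸ h 1 le_rfl⟩
end

section
/- Let $\mathcal{T}$ be a triangulated category with an action of a graded-commutative ring $R$, and let $x, y \in R$ be productive elements (i.e. $x$ acts as zero on $M /\!\!/ x$ for every object $M$, and similarly for $y$). Then the product $xy$ is productive: $xy$ acts as zero on $M /\!\!/ (xy)$ for every object $M$. -/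
open CategoryTheory Category Limits Pretriangulated

universe v u

variable (T : Type u) [Category.{v} T] [Preadditive T] [HasZeroObject T]
  [HasShift T ℤ] [∀ n : ℤ, (CategoryTheory.shiftFunctor T n).Additive] [Pretriangulated T]

/-- A homogeneous element of degree `d` of a graded-commutative ring acting on the
triangulated category `T`, i.e. an element of the graded center: a family of morphisms
`x(M) : M ⟶ Σ^d M`, natural in `M` and commuting with the suspension up to the sign
`(-1)^d`. -/
structure CentralElement (d : ℤ) where
  app : ∀ M : T, M ⟶ M⟦d⟧
  natural : ∀ {M N : T} (f : M ⟶ N), app M ≫ f⟦d⟧' = f ≫ app N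
  shift_comm : ∀ M : T, app (M⟦(1:ℤ)⟧) =
    (((-1 : ℤˣ) ^ d : ℤˣ) : ℤ) • ((app M)⟦(1:ℤ)⟧' ≫ (shiftComm M d 1).hom)

/-- A morphism `f` is `C`-ghost if it induces zero on `Hom^*_T(C,-)`. -/
def IsGhost (C : T) {A B : T} (f : A ⟶ B) : Prop :=
  ∀ (n : ℤ) (g : C⟦n⟧ ⟶ A), g ≫ f = 0

/-- A morphism `f` is `M`-coghost if it induces zero on `Hom^*_T(-,M)`. -/
def IsCoghost (M : T) {A B : T} (f : A ⟶ B) : Prop :=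
  ∀ (n : ℤ) (g : B ⟶ M⟦n⟧), f ≫ g = 0

/-- `x` acts as a non-zero divisor on the graded module `Hom^*_T(C,M)`. -/
def IsRegularOn {d : ℤ} (x : CentralElement T d) (C M : T) : Prop :=
  ∀ (n : ℤ) (f : C⟦n⟧ ⟶ M), f ≫ x.app M = 0 → f = 0

/-- `x` is productive: `x` acts as zero on every Koszul object `M ⫽ x` (i.e. on every
cone of `x(M)`), for every object `M`. -/
def Productive {d : ℤ} (x : CentralElement T d) : Prop :=
  ∀ (M K : T) (g : M⟦d⟧ ⟶ K) (h : K ⟶ M⟦(1:ℤ)⟧),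
    (Triangle.mk (x.app M) g h ∈ distTriang T) → x.app K = 0

/-!
Let `z` act as `u` followed by `v`, and put `L = M ⫽ u`, `K = M ⫽ z`, `Q = Σ^{|u|} M ⫽ v`.
The octahedral triangle `L → K → Q → ΣL` is not available in a pretriangulated category, but maps
`L → K → Q` compatible with the Koszul triangles and with zero composite can be built by hand.
Using them and `u(L) = 0`, the map `u(K)` splits as a map factoring through `Q`, which `v` kills,
plus a map factoring through `h ≫ Σ u(M)`, where `h : K → ΣM` is the connecting map; `v` kills
the latter because `h ≫ Σ z(M) = 0` and `v` commutes with `Σ` up to sign.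
-/

section

variable {T}

lemma Productive.app_eq_zero_of_distTriang_comp_iso {d : ℤ} {x : CentralElement T d}
    (hx : Productive T x) {M N K : T} (e : M⟦d⟧ ≅ N) {g : N ⟶ K} {h : K ⟶ M⟦(1:ℤ)⟧}
    (hT : Triangle.mk (x.app M ≫ e.hom) g h ∈ distTriang T) : x.app K = 0 :=
  hx M K (e.hom ≫ g) h (isomorphic_distinguished _ hT _
    (Triangle.isoMk _ _ (Iso.refl _) e (Iso.refl _) (id_comp _).symm (comp_id _)
      (by change h ≫ (𝟙 M)⟦(1:ℤ)⟧' = 𝟙 K ≫ h; simp)))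

namespace CentralElement

omit [HasZeroObject T] [∀ n : ℤ, (shiftFunctor T n).Additive] [Pretriangulated T] in
lemma comp_app_shift_eq_zero {d : ℤ} (x : CentralElement T d) {A X : T} {f : A ⟶ X⟦(1:ℤ)⟧}
    (hf : f ≫ (x.app X)⟦(1:ℤ)⟧' = 0) : f ≫ x.app (X⟦(1:ℤ)⟧) = 0 := by
  rw [x.shift_comm, Preadditive.comp_zsmul, reassoc_of% hf, zero_comp, smul_zero]

variable {du dv : ℤ} (u : CentralElement T du) (v : CentralElement T dv) {M N L K Q : T}
  (e : M⟦du⟧⟦dv⟧ ≅ N) {g₁ : M⟦du⟧ ⟶ L} {h₁ : L ⟶ M⟦(1:ℤ)⟧} {g : N ⟶ K} {h : K ⟶ M⟦(1:ℤ)⟧}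
  {g₂ : N ⟶ Q} {h₂ : Q ⟶ M⟦du⟧⟦(1:ℤ)⟧}

lemma exists_koszul_maps (hT₁ : Triangle.mk (u.app M) g₁ h₁ ∈ distTriang T)
    (hT : Triangle.mk (u.app M ≫ v.app (M⟦du⟧) ≫ e.hom) g h ∈ distTriang T)
    (hT₂ : Triangle.mk (v.app (M⟦du⟧) ≫ e.hom) g₂ h₂ ∈ distTriang T) :
    ∃ (m₁ : L ⟶ K) (m₂ : K ⟶ Q),
      g₁ ≫ m₁ = (v.app (M⟦du⟧) ≫ e.hom) ≫ g ∧ m₁ ≫ h = h₁ ∧ g ≫ m₂ = g₂ ∧ m₁ ≫ m₂ = 0 := by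
  have hg₂ : (v.app (M⟦du⟧) ≫ e.hom) ≫ g₂ = 0 := comp_distTriang_mor_zero₁₂ _ hT₂
  have hgh : g ≫ h = 0 := comp_distTriang_mor_zero₂₃ _ hT
  obtain ⟨m₁, hm₁g, hm₁h⟩ : ∃ m₁ : L ⟶ K,
      g₁ ≫ m₁ = (v.app (M⟦du⟧) ≫ e.hom) ≫ g ∧ h₁ ≫ (𝟙 M)⟦(1:ℤ)⟧' = m₁ ≫ h :=
    complete_distinguished_triangle_morphism _ _ hT₁ hT (𝟙 M) _ (id_comp _).symm
  rw [CategoryTheory.Functor.map_id, comp_id] at hm₁h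
  obtain ⟨m, hm⟩ : ∃ m : K ⟶ Q, g₂ = g ≫ m :=
    Triangle.yoneda_exact₂ _ hT g₂ (by
      change (u.app M ≫ v.app (M⟦du⟧) ≫ e.hom) ≫ g₂ = 0
      rw [assoc, hg₂, comp_zero])
  obtain ⟨w, hw⟩ : ∃ w : M⟦(1:ℤ)⟧ ⟶ Q, m₁ ≫ m = h₁ ≫ w :=
    Triangle.yoneda_exact₃ _ hT₁ (m₁ ≫ m) (by
      change g₁ ≫ m₁ ≫ m = 0
      rw [← assoc, hm₁g, assoc, ← hm, hg₂])
  refine ⟨m₁, m - h ≫ w, hm₁g, hm₁h.symm, ?_, ?_⟩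
  · rw [Preadditive.comp_sub, ← hm, reassoc_of% hgh, zero_comp, sub_zero]
  · rw [Preadditive.comp_sub, hw, reassoc_of% hm₁h, sub_self]

lemma exists_app_eq_add (hT₁ : Triangle.mk (u.app M) g₁ h₁ ∈ distTriang T)
    (hT : Triangle.mk (u.app M ≫ v.app (M⟦du⟧) ≫ e.hom) g h ∈ distTriang T)
    (hT₂ : Triangle.mk (v.app (M⟦du⟧) ≫ e.hom) g₂ h₂ ∈ distTriang T) (hL : u.app L = 0) :
    ∃ (m : K ⟶ Q) (ξ : Q ⟶ K⟦du⟧) (t : M⟦du⟧⟦(1:ℤ)⟧ ⟶ K⟦du⟧),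
      u.app K = m ≫ ξ + h ≫ (u.app M)⟦(1:ℤ)⟧' ≫ t := by
  obtain ⟨m₁, m, hm₁g, hm₁h, hm, hm₁m⟩ := exists_koszul_maps u v e hT₁ hT hT₂
  have hm₁u : m₁ ≫ u.app K = 0 := by rw [← u.natural, hL, zero_comp]
  obtain ⟨ξ, hξ⟩ : ∃ ξ : Q ⟶ K⟦du⟧, u.app N ≫ g⟦du⟧' = g₂ ≫ ξ :=
    Triangle.yoneda_exact₂ _ hT₂ _ (by
      change (v.app (M⟦du⟧) ≫ e.hom) ≫ u.app N ≫ g⟦du⟧' = 0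
      rw [← assoc, ← u.natural, assoc, ← Functor.map_comp, ← hm₁g, Functor.map_comp,
        ← assoc, u.natural, hL, comp_zero, zero_comp])
  obtain ⟨s, hs⟩ : ∃ s : M⟦(1:ℤ)⟧ ⟶ K⟦du⟧, u.app K - m ≫ ξ = h ≫ s :=
    Triangle.yoneda_exact₃ _ hT _ (by
      change g ≫ (u.app K - m ≫ ξ) = 0
      rw [Preadditive.comp_sub, ← u.natural, hξ, reassoc_of% hm, sub_self])
  obtain ⟨t, ht⟩ : ∃ t : M⟦du⟧⟦(1:ℤ)⟧ ⟶ K⟦du⟧, s = (-(u.app M)⟦(1:ℤ)⟧') ≫ t :=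
    Triangle.yoneda_exact₃ _ (rot_of_distTriang _ hT₁) s (by
      change h₁ ≫ s = 0
      rw [← hm₁h, assoc, ← hs, Preadditive.comp_sub, hm₁u, reassoc_of% hm₁m, zero_comp,
        sub_zero])
  refine ⟨m, ξ, -t, ?_⟩
  rw [← sub_eq_iff_eq_add', hs, ht, Preadditive.neg_comp, Preadditive.comp_neg,
    Preadditive.comp_neg, Preadditive.comp_neg]

lemma app_comp_app_eq_zero_of_distTriang (hT₁ : Triangle.mk (u.app M) g₁ h₁ ∈ distTriang T)
    (hT : Triangle.mk (u.app M ≫ v.app (M⟦du⟧) ≫ e.hom) g h ∈ distTriang T)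
    (hT₂ : Triangle.mk (v.app (M⟦du⟧) ≫ e.hom) g₂ h₂ ∈ distTriang T)
    (hL : u.app L = 0) (hQ : v.app Q = 0) : u.app K ≫ v.app (K⟦du⟧) = 0 := by
  obtain ⟨m, ξ, t, hu⟩ := exists_app_eq_add u v e hT₁ hT hT₂ hL
  have hhz : h ≫ (u.app M ≫ v.app (M⟦du⟧) ≫ e.hom)⟦(1:ℤ)⟧' = 0 :=
    comp_distTriang_mor_zero₃₁ _ hT
  have hhuv : (h ≫ (u.app M)⟦(1:ℤ)⟧') ≫ (v.app (M⟦du⟧))⟦(1:ℤ)⟧' = 0 := by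
    rw [← cancel_mono (e.hom⟦(1:ℤ)⟧'), zero_comp]
    simpa using hhz
  rw [hu, Preadditive.add_comp, assoc, ← v.natural, reassoc_of% hQ, zero_comp, comp_zero,
    zero_add, assoc, assoc, ← v.natural, ← assoc, ← assoc, v.comp_app_shift_eq_zero hhuv,
    zero_comp]

end CentralElement

end

theorem stmt5 {dx dy : ℤ} (x : CentralElement T dx) (y : CentralElement T dy)
    (z : CentralElement T (dx + dy))
    (hz : ∀ M : T, z.app M = y.app M ≫ x.app (M⟦dy⟧) ≫
      (shiftFunctorAdd' T dy dx (dx + dy) (add_comm dy dx)).inv.app M)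
    (hx : Productive T x) (hy : Productive T y) :
    Productive T z := by
  intro M K g h hT
  let e : M⟦dy⟧⟦dx⟧ ≅ M⟦dx + dy⟧ :=
    ((shiftFunctorAdd' T dy dx (dx + dy) (add_comm dy dx)).app M).symm
  obtain ⟨L, g₁, h₁, hT₁⟩ := distinguished_cocone_triangle (y.app M)
  obtain ⟨Q, g₂, h₂, hT₂⟩ := distinguished_cocone_triangle (x.app (M⟦dy⟧) ≫ e.hom)
  rw [hz M] at hT
  rw [hz K, ← assoc, y.app_comp_app_eq_zero_of_distTriang x e hT₁ hT hT₂ (hy M L g₁ h₁ hT₁)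
    (hx.app_eq_zero_of_distTriang_comp_iso e hT₂), zero_comp]
end

section
/- Let $\mathcal{T}$ be an $R$-linear triangulated category and $M \in \mathcal{T}$. For a homogeneous $x \in R$, the following are equivalent: (1) the morphism $\Sigma^{-1}(M /\!\!/ x) \to M$ is zero; (2) the object $M /\!\!/ x$ is zero; (3) $M /\!\!/ x^n = 0$ for some $n \geq 1$; (4) $M /\!\!/ x^n = 0$ for all $n \geq 1$. -/
/-!
All four conditions say that `x` acts invertibly on `M`. The Koszul object `M ⫽ xⁿ` vanishes
iff `xⁿ(M)` is invertible, and the connecting map `M ⫽ x ⟶ ΣM` vanishes iff `x(M)` is a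
monomorphism. As `xⁿ⁺¹(M)` is `x(M)` followed by `xⁿ(Σ^{|x|} M)` up to an isomorphism, and `x`
acts invertibly on `Σ^{|x|} M` when it does on `M`, everything reduces to: if `x(M)` is a
monomorphism then it is an isomorphism. Here centrality enters: on `Σ^{|x|} M` the element `x`
acts as `± Σ^{|x|} x(M)`, so `x` kills its cone `K`; when `x(M)` is mono the triangle splits,
`𝟙_K` factors through `Σ^{|x|} M`, and that factorisation is killed by the monomorphism
`Σ^{|x|} x(M)`, so `K = 0`.
-/

open CategoryTheory Category Limits Pretriangulated

universe v u

variable (T : Type u) [Category.{v} T] [Preadditive T] [HasZeroObject T]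
  [HasShift T ℤ] [∀ n : ℤ, (CategoryTheory.shiftFunctor T n).Additive] [Pretriangulated T]

section

variable {T}

omit [Preadditive T] [HasZeroObject T] [∀ n : ℤ, (shiftFunctor T n).Additive] [Pretriangulated T] in
lemma shift_map_shiftFunctorComm_add_one (e m : ℤ) (N : T) (u : N ⟶ N⟦e⟧) :
    u⟦m+1⟧' ≫ (shiftFunctorComm T e (m+1)).hom.app N ≫
      ((shiftFunctorAdd T m 1).hom.app N)⟦e⟧' =
    (shiftFunctorAdd T m 1).hom.app N ≫ (u⟦m⟧')⟦1⟧' ≫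
      ((shiftFunctorComm T e m).hom.app N)⟦1⟧' ≫
      (shiftFunctorComm T e 1).hom.app (N⟦m⟧) := by
  rw [shiftFunctorComm_hom_app_comp_shift_shiftFunctorAdd_hom_app]
  have := (shiftFunctorAdd T m 1).hom.naturality u
  dsimp at this
  rw [reassoc_of% this]

namespace CentralElement

variable {e : ℤ} (y : CentralElement T e)

section

omit [HasZeroObject T] [Pretriangulated T]

omit [∀ n : ℤ, (shiftFunctor T n).Additive] in
lemma app_shift_add_one_comp (m : ℤ) (N : T) :
    y.app (N⟦m + 1⟧) ≫ ((shiftFunctorAdd T m 1).hom.app N)⟦e⟧' =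
      (((-1 : ℤˣ) ^ e : ℤˣ) : ℤ) • ((shiftFunctorAdd T m 1).hom.app N ≫
        (y.app (N⟦m⟧))⟦1⟧' ≫ (shiftFunctorComm T e 1).hom.app (N⟦m⟧)) := by
  rw [y.natural]
  simp only [Functor.comp_obj]
  rw [y.shift_comm, Preadditive.comp_zsmul]
  rfl

lemma app_shift_add_one_iff (m : ℤ) (N : T) :
    y.app (N⟦m + 1⟧) = ((((-1 : ℤˣ) ^ e) ^ (m + 1) : ℤˣ) : ℤ) •
      ((y.app N)⟦m + 1⟧' ≫ (shiftFunctorComm T e (m + 1)).hom.app N) ↔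
    y.app (N⟦m⟧) = ((((-1 : ℤˣ) ^ e) ^ m : ℤˣ) : ℤ) •
      ((y.app N)⟦m⟧' ≫ (shiftFunctorComm T e m).hom.app N) := by
  rw [← cancel_mono (((shiftFunctorAdd T m 1).hom.app N)⟦e⟧'), app_shift_add_one_comp,
    Preadditive.zsmul_comp, assoc, shift_map_shiftFunctorComm_add_one, zpow_add_one,
    Units.val_mul, mul_comm, mul_smul, ← Units.smul_def, ← Units.smul_def, smul_left_cancel_iff,
    ← Functor.map_comp_assoc, ← Preadditive.comp_zsmul, ← Preadditive.zsmul_comp,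
    ← Functor.map_zsmul, cancel_epi, cancel_mono, (shiftFunctor T (1 : ℤ)).map_injective.eq_iff]

lemma app_shift (n : ℤ) (N : T) :
    y.app (N⟦n⟧) = ((((-1 : ℤˣ) ^ e) ^ n : ℤˣ) : ℤ) •
      ((y.app N)⟦n⟧' ≫ (shiftFunctorComm T e n).hom.app N) := by
  induction n using Int.induction_on with
  | zero =>
    have h1 := y.natural ((shiftFunctorZero T ℤ).hom.app N)
    have h2 := (shiftFunctorZero T ℤ).hom.naturality (y.app N)
    dsimp at h2
    rw [zpow_zero, Units.val_one, one_smul, shiftFunctorComm_zero_hom_app,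
      ← cancel_mono (((shiftFunctorZero T ℤ).hom.app N)⟦e⟧'), h1]
    simp only [assoc, ← Functor.map_comp, Iso.inv_hom_id_app, Functor.id_obj, Functor.comp_obj]
    rw [(shiftFunctor T e).map_id, comp_id]
    exact h2.symm
  | succ n ih => exact (y.app_shift_add_one_iff n N).2 ih
  | pred n ih =>
    refine (y.app_shift_add_one_iff (-(n : ℤ) - 1) N).1 ?_
    rwa [sub_add_cancel]

lemma app_shift_self (N : T) :
    y.app (N⟦e⟧) = ((((-1 : ℤˣ) ^ e) ^ e : ℤˣ) : ℤ) • (y.app N)⟦e⟧' := by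
  rw [y.app_shift e N, shiftFunctorComm_eq_refl]
  simp

lemma comp_app_eq_zero_of_app_comp_eq_zero {M K : T} {f : M⟦e⟧ ⟶ K}
    (hf : y.app M ≫ f = 0) : f ≫ y.app K = 0 := by
  rw [← y.natural f, y.app_shift_self, Preadditive.zsmul_comp, ← Functor.map_comp, hf,
    Functor.map_zero, smul_zero]

lemma comp_shift_map_app_eq_zero_of_app_eq_zero {K M : T} (f : K ⟶ M⟦e⟧)
    (hK : y.app K = 0) : f ≫ (y.app M)⟦e⟧' = 0 := by
  have hf := y.natural f
  rw [hK, zero_comp, y.app_shift_self, Preadditive.comp_zsmul, ← Units.smul_def] at hf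
  exact (smul_eq_zero_iff_eq _).1 hf.symm

end

lemma isIso_app_of_mono (M : T) [Mono (y.app M)] : IsIso (y.app M) := by
  obtain ⟨K, g, h, hT⟩ := distinguished_cocone_triangle (y.app M)
  have h0 : h = 0 := Triangle.mor₃_eq_zero_of_mono₁ _ hT ‹_›
  obtain ⟨t, ht⟩ : ∃ t : K ⟶ M⟦e⟧, 𝟙 K = t ≫ g :=
    Triangle.coyoneda_exact₃ _ hT (𝟙 K) (by rw [h0]; exact comp_zero)
  have hyK : y.app K = 0 := by
    have hg : g ≫ y.app K = 0 :=
      y.comp_app_eq_zero_of_app_comp_eq_zero (comp_distTriang_mor_zero₁₂ _ hT)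
    rw [← id_comp (y.app K), ht, assoc, hg, comp_zero]
  have ht0 : t = 0 := by
    rw [← cancel_mono ((y.app M)⟦e⟧'), zero_comp]
    exact y.comp_shift_map_app_eq_zero_of_app_eq_zero t hyK
  have hK : IsZero K := by rw [IsZero.iff_id_eq_zero, ht, ht0, zero_comp]
  exact (Triangle.isZero₃_iff_isIso₁ _ hT).1 hK

lemma isIso_app_iff_mono (M : T) : IsIso (y.app M) ↔ Mono (y.app M) :=
  ⟨fun _ => inferInstance, fun _ => y.isIso_app_of_mono M⟩

omit [HasZeroObject T] [∀ n : ℤ, (shiftFunctor T n).Additive] [Pretriangulated T] in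
lemma isIso_app_shift_of_isIso (N : T) [IsIso (y.app N)] : IsIso (y.app (N⟦e⟧)) := by
  have h : y.app (N⟦e⟧) = (y.app N)⟦e⟧' := ((cancel_epi (y.app N)).1 (y.natural (y.app N))).symm
  rw [h]
  infer_instance

end CentralElement

lemma isIso_pow_succ_app_iff {d : ℤ} {x : CentralElement T d}
    {xpow : ∀ n : ℕ, CentralElement T ((n : ℤ) * d)}
    (hx1 : ∀ M : T, (xpow 1).app M = x.app M ≫ eqToHom (by rw [Nat.cast_one, one_mul]))
    (hpow : ∀ (n : ℕ) (M : T), (xpow (n + 1)).app M =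
      x.app M ≫ (xpow n).app (M⟦d⟧) ≫
        (shiftFunctorAdd' T d ((n : ℤ) * d) (((n + 1 : ℕ) : ℤ) * d)
          (by push_cast; ring)).inv.app M)
    (n : ℕ) (N : T) : IsIso ((xpow (n + 1)).app N) ↔ IsIso (x.app N) := by
  constructor
  · intro hn
    have : Mono ((xpow (n + 1)).app N) := inferInstance
    rw [hpow] at this
    exact (x.isIso_app_iff_mono N).2 (@mono_of_mono _ _ _ _ _ _ _ this)
  · intro hN
    induction n generalizing N with
    | zero => rw [hx1]; infer_instance
    | succ k ih =>
      have := x.isIso_app_shift_of_isIso N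
      have := ih (N⟦d⟧) inferInstance
      rw [hpow]
      infer_instance

end

theorem stmt9 {d : ℤ} (x : CentralElement T d)
    (xpow : ∀ n : ℕ, CentralElement T ((n : ℤ) * d))
    (hx1 : ∀ M : T, (xpow 1).app M = x.app M ≫ eqToHom (by rw [Nat.cast_one, one_mul]))
    (hpow : ∀ (n : ℕ) (M : T), (xpow (n + 1)).app M =
      x.app M ≫ (xpow n).app (M⟦d⟧) ≫
        (shiftFunctorAdd' T d ((n : ℤ) * d) (((n + 1 : ℕ) : ℤ) * d)
          (by push_cast; ring)).inv.app M)
    (M : T) (K : ℕ → T)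
    (g : ∀ n : ℕ, M⟦(n : ℤ) * d⟧ ⟶ K n) (h : ∀ n : ℕ, K n ⟶ M⟦(1:ℤ)⟧)
    (ht : ∀ n : ℕ, 1 ≤ n → Triangle.mk ((xpow n).app M) (g n) (h n) ∈ distTriang T) :
    List.TFAE [h 1 = 0, IsZero (K 1),
      ∃ n : ℕ, 1 ≤ n ∧ IsZero (K n), ∀ n : ℕ, 1 ≤ n → IsZero (K n)] := by
  have hK : ∀ n, IsZero (K (n + 1)) ↔ IsIso (x.app M) := fun n =>
    (Triangle.isZero₃_iff_isIso₁ _ (ht (n + 1) (by omega))).trans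
      (isIso_pow_succ_app_iff hx1 hpow n M)
  have hh : h 1 = 0 ↔ IsIso (x.app M) :=
    ((Triangle.mor₃_eq_zero_iff_mono₁ _ (ht 1 le_rfl)).trans
      ((xpow 1).isIso_app_iff_mono M).symm).trans (isIso_pow_succ_app_iff hx1 hpow 0 M)
  tfae_have 1 ↔ 2 := hh.trans (hK 0).symm
  tfae_have 2 → 4 := fun h2 n hn => by
    obtain ⟨m, rfl⟩ : ∃ m, n = m + 1 := ⟨n - 1, by omega⟩
    exact (hK m).2 ((hK 0).1 h2)
  tfae_have 4 → 3 := fun h4 => ⟨1, le_rfl, h4 1 le_rfl⟩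
  tfae_have 3 → 2 := fun ⟨n, hn, hz⟩ => by
    obtain ⟨m, rfl⟩ : ∃ m, n = m + 1 := ⟨n - 1, by omega⟩
    exact (hK 0).2 ((hK m).1 hz)
  tfae_finish
end

section
/- In the derived category of $\mathbb{Z}$-modules, the complex $M$ with $\mathbb{Z}/3$ in degree $1$ and $\mathbb{Z}/2$ in degree $0$ and zero differential satisfies: multiplication by $2$ is injective on $\mathrm{Hom}^*_{D(\mathbb{Z})}(\mathbb{Z}/3, M)$ (indeed this graded group computes to $\mathbb{Z}/3$-related terms annihilated appropriately), the Koszul object $M /\!\!/ 2$ (the cone of multiplication by $2$ on $M$) is nonzero, yet $\mathrm{Hom}^*_{D(\mathbb{Z})}(\mathbb{Z}/3, M /\!\!/ 2) = 0$. -/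
/-!
Every map out of a shift of `ℤ/3` is killed by `3`, so a map that is also killed by `2` vanishes.
In a distinguished triangle `M --2--> M --g--> K --h--> M⟦1⟧` both `g` and `h` are killed by `2`.
Hence for `f : ℤ/3⟦n⟧ ⟶ K` the composite `f ≫ h` is zero, `f` factors through `g`, and so `f` is
killed by `2` and vanishes. On the other hand `K ≠ 0`, since `2` is not invertible on
`H⁰(M) = ℤ/2`.
-/

open CategoryTheory Limits Pretriangulated

noncomputable section

attribute [local instance] HasDerivedCategory.standard

/-- The complex with `ℤ/3` in cohomological degree `-1` (homological degree `1`),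
`ℤ/2` in degree `0`, and zero differentials. -/
def Mcplx : CochainComplex (ModuleCat ℤ) ℤ where
  X n := if n = -1 then ModuleCat.of ℤ (ZMod 3)
    else if n = 0 then ModuleCat.of ℤ (ZMod 2) else ModuleCat.of ℤ PUnit
  d _ _ := 0
  shape _ _ _ := rfl

/-- `M` as an object of the derived category `D(ℤ)`. -/
def Mobj : DerivedCategory (ModuleCat ℤ) := DerivedCategory.Q.obj Mcplx

/-- `C = ℤ/3`, viewed as a complex concentrated in degree `0`, in `D(ℤ)`. -/
def Cobj : DerivedCategory (ModuleCat ℤ) :=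
  DerivedCategory.Q.obj
    ((HomologicalComplex.single (ModuleCat ℤ) (ComplexShape.up ℤ) 0).obj
      (ModuleCat.of ℤ (ZMod 3)))

namespace CategoryTheory

section Preadditive

variable {C : Type*} [Category C] [Preadditive C]

lemma Preadditive.eq_zero_of_zsmul_eq_zero_of_zsmul_id_eq_zero {X Y : C} {a b : ℤ}
    (hab : IsCoprime a b) (ha : a • 𝟙 X = 0) {f : X ⟶ Y} (hb : b • f = 0) : f = 0 := by
  obtain ⟨u, v, huv⟩ := hab
  have haf : a • f = 0 := by rw [← Category.id_comp f, ← Preadditive.zsmul_comp, ha, zero_comp]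
  calc f = (u * a + v * b) • f := by rw [huv, one_smul]
    _ = 0 := by rw [add_smul, mul_smul, mul_smul, haf, hb, smul_zero, smul_zero, add_zero]

lemma Functor.zsmul_id_obj_eq_zero {D : Type*} [Category D] [Preadditive D] (F : C ⥤ D)
    [F.Additive] {X : C} {a : ℤ} (ha : a • 𝟙 X = 0) : a • 𝟙 (F.obj X) = 0 := by
  rw [← F.map_id, ← F.map_zsmul, ha, F.map_zero]

lemma Iso.zsmul_id_eq_zero {X Y : C} (e : X ≅ Y) {a : ℤ} (ha : a • 𝟙 X = 0) : a • 𝟙 Y = 0 := by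
  have hY : a • 𝟙 Y = e.inv ≫ (a • 𝟙 X) ≫ e.hom := by simp
  rw [hY, ha, zero_comp, comp_zero]

lemma Preadditive.not_isIso_zsmul_id [HasZeroObject C] {X : C} (hX : ¬ IsZero X) {a : ℤ}
    (ha : a • 𝟙 X = 0) : ¬ IsIso (a • 𝟙 X) := by
  rw [ha, isIsoZero_iff_source_target_isZero]
  exact fun h => hX h.1

end Preadditive

namespace Pretriangulated

variable {C : Type*} [Category C] [Preadditive C] [HasZeroObject C] [HasShift C ℤ]
  [∀ n : ℤ, (shiftFunctor C n).Additive] [Pretriangulated C]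
  {X K : C} {n : ℤ} {g : X ⟶ K} {h : K ⟶ X⟦(1 : ℤ)⟧}

lemma zsmul_mor₂_eq_zero_of_distTriang (hT : Triangle.mk (n • 𝟙 X) g h ∈ distTriang C) :
    n • g = 0 := by
  have h₁₂ : (n • 𝟙 X) ≫ g = 0 := comp_distTriang_mor_zero₁₂ _ hT
  rwa [Preadditive.zsmul_comp, Category.id_comp] at h₁₂

lemma zsmul_mor₃_eq_zero_of_distTriang (hT : Triangle.mk (n • 𝟙 X) g h ∈ distTriang C) :
    n • h = 0 := by
  have h₃₁ : h ≫ (n • 𝟙 X)⟦(1 : ℤ)⟧' = 0 := comp_distTriang_mor_zero₃₁ _ hT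
  rwa [Functor.map_zsmul, Functor.map_id, Preadditive.comp_zsmul, Category.comp_id] at h₃₁

lemma eq_zero_of_distTriang_zsmul_id (hT : Triangle.mk (n • 𝟙 X) g h ∈ distTriang C)
    {T : C} {a : ℤ} (ha : a • 𝟙 T = 0) (han : IsCoprime a n) (f : T ⟶ K) : f = 0 := by
  have hfh : f ≫ h = 0 := Preadditive.eq_zero_of_zsmul_eq_zero_of_zsmul_id_eq_zero han ha (by
    rw [← Preadditive.comp_zsmul, zsmul_mor₃_eq_zero_of_distTriang hT, comp_zero])
  obtain ⟨u, rfl⟩ : ∃ u, f = u ≫ g := Triangle.coyoneda_exact₃ _ hT f hfh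
  exact Preadditive.eq_zero_of_zsmul_eq_zero_of_zsmul_id_eq_zero han ha (by
    rw [← Preadditive.comp_zsmul, zsmul_mor₂_eq_zero_of_distTriang hT, comp_zero])

end Pretriangulated

end CategoryTheory

lemma ModuleCat.natCast_zsmul_id_zmod_eq_zero (n : ℕ) :
    (n : ℤ) • 𝟙 (ModuleCat.of ℤ (ZMod n)) = 0 := by
  ext x
  simp

lemma three_zsmul_id_shift_Cobj (n : ℤ) : (3 : ℤ) • 𝟙 (Cobj⟦n⟧) = 0 :=
  (shiftFunctor _ n).zsmul_id_obj_eq_zero <| DerivedCategory.Q.zsmul_id_obj_eq_zero <|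
    Functor.zsmul_id_obj_eq_zero _ (ModuleCat.natCast_zsmul_id_zmod_eq_zero 3)

def homologyZeroMobjIso :
    (DerivedCategory.homologyFunctor (ModuleCat ℤ) 0).obj Mobj ≅ ModuleCat.of ℤ (ZMod 2) :=
  (DerivedCategory.homologyFunctorFactors (ModuleCat ℤ) 0).app Mcplx ≪≫
    (ShortComplex.HomologyData.ofZeros (Mcplx.sc 0) rfl rfl).left.homologyIso

lemma not_isIso_two_zsmul_id_Mobj : ¬ IsIso ((2 : ℤ) • 𝟙 Mobj) := by
  intro h2
  have hH : IsIso ((2 : ℤ) • 𝟙 ((DerivedCategory.homologyFunctor (ModuleCat ℤ) 0).obj Mobj)) := by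
    simpa only [Functor.map_zsmul, CategoryTheory.Functor.map_id] using
      Functor.map_isIso (DerivedCategory.homologyFunctor (ModuleCat ℤ) 0) ((2 : ℤ) • 𝟙 Mobj)
  have hZMod2 : ¬ IsZero (ModuleCat.of ℤ (ZMod 2)) := by
    rw [ModuleCat.isZero_of_iff_subsingleton, not_subsingleton_iff_nontrivial]
    infer_instance
  exact Preadditive.not_isIso_zsmul_id (fun hz => hZMod2 (hz.of_iso homologyZeroMobjIso.symm))
    (homologyZeroMobjIso.symm.zsmul_id_eq_zero (ModuleCat.natCast_zsmul_id_zmod_eq_zero 2)) hH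

theorem stmt12 :
    (∀ (n : ℤ) (f : Cobj⟦n⟧ ⟶ Mobj), (2 : ℤ) • f = 0 → f = 0) ∧
    ∀ (K : DerivedCategory (ModuleCat ℤ)) (g : Mobj ⟶ K) (h : K ⟶ Mobj⟦(1:ℤ)⟧),
      (Triangle.mk ((2 : ℤ) • 𝟙 Mobj) g h ∈ distTriang (DerivedCategory (ModuleCat ℤ))) →
        ¬ IsZero K ∧ ∀ (n : ℤ) (f : Cobj⟦n⟧ ⟶ K), f = 0 := by
  have h32 : IsCoprime (3 : ℤ) 2 := ⟨1, -1, by norm_num⟩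
  refine ⟨fun n f hf => ?_, fun K g h hT => ⟨fun hK => ?_, fun n f => ?_⟩⟩
  · exact Preadditive.eq_zero_of_zsmul_eq_zero_of_zsmul_id_eq_zero h32
      (three_zsmul_id_shift_Cobj n) hf
  · exact not_isIso_two_zsmul_id_Mobj ((Triangle.isZero₃_iff_isIso₁ _ hT).1 hK)
  · exact eq_zero_of_distTriang_zsmul_id hT (three_zsmul_id_shift_Cobj n) h32 f

end
end

section
/- Let $A$ be a commutative ring, $M$ an $A$-module, and $x_1, \ldots, x_t \in A$. If both $x_1, \ldots, x_i, \ldots, x_t$ and $x_1, \ldots, x_i', \ldots, x_t$ are weakly $M$-regular sequences (each element is a non-zero divisor on the quotient of $M$ by the ideal generated by the preceding elements), then $x_1, \ldots, x_i x_i', \ldots, x_t$ is also a weakly $M$-regular sequence. -/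
/-!
If `a` is `N`-regular, multiplication by `a` makes `0 → N ⧸ bN → N ⧸ abN → N ⧸ aN → 0` exact.
So if `a :: rs` and `b :: rs` are weakly `N`-regular, then `ab` is `N`-regular and `rs` is weakly
regular on both outer terms, hence on the middle one: weak regularity passes to the middle of a
short exact sequence, because reducing modulo an element that is regular on the right-hand term
keeps the sequence short exact. Entries before position `i` are handled by passing to the quotient.
-/

open RingTheory.Sequence Submodule Function
open scoped Pointwise

section

variable {R : Type*} [CommRing R]

lemma Submodule.mem_smul_top_iff_exists {M : Type*} [AddCommGroup M] [Module R M] {r : R}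
    {x : M} : x ∈ (r • ⊤ : Submodule R M) ↔ ∃ y, r • y = x := by
  simp [mem_smul_pointwise_iff_exists]

namespace QuotSMulTop

variable {N : Type*} [AddCommGroup N] [Module R N]

lemma map_injective {N₁ N₂ : Type*} [AddCommGroup N₁] [AddCommGroup N₂] [Module R N₁]
    [Module R N₂] {r : R} {f : N₁ →ₗ[R] N} {g : N →ₗ[R] N₂} (hf : Injective f)
    (hfg : Exact f g) (hr : IsSMulRegular N₂ r) : Injective (map r f) := by
  rw [← LinearMap.exact_zero_iff_injective PUnit] at hf ⊢
  simpa using map_first_exact_on_four_term_exact_of_isSMulRegular_last hf hfg hr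

def lsmul (a b : R) : QuotSMulTop b N →ₗ[R] QuotSMulTop (a * b) N :=
  mapQ _ _ (LinearMap.lsmul R N a) fun x hx => by
    obtain ⟨y, rfl⟩ := mem_smul_top_iff_exists.mp hx
    exact mem_smul_top_iff_exists.mpr ⟨y, by simp [mul_smul, smul_comm a b]⟩

def factorMul (a b : R) : QuotSMulTop (a * b) N →ₗ[R] QuotSMulTop a N :=
  factor <| by rw [mul_smul]; exact smul_le_smul_left a le_top

variable {a b : R}

@[simp]
lemma lsmul_mk (y : N) : lsmul a b (Submodule.Quotient.mk y) = Submodule.Quotient.mk (a • y) :=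
  rfl

@[simp]
lemma factorMul_mk (y : N) :
    factorMul a b (Submodule.Quotient.mk y : QuotSMulTop (a * b) N) = Submodule.Quotient.mk y :=
  rfl

lemma lsmul_injective (ha : IsSMulRegular N a) : Injective (lsmul (N := N) a b) := by
  rw [← LinearMap.ker_eq_bot, eq_bot_iff]
  intro x hx
  obtain ⟨y, rfl⟩ := mkQ_surjective _ x
  rw [LinearMap.mem_ker, mkQ_apply, lsmul_mk, Quotient.mk_eq_zero] at hx
  obtain ⟨z, hz⟩ := mem_smul_top_iff_exists.mp hx
  rw [mem_bot, mkQ_apply, Quotient.mk_eq_zero]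
  exact mem_smul_top_iff_exists.mpr ⟨z, ha (by simpa [mul_smul] using hz)⟩

lemma factorMul_surjective : Surjective (factorMul (N := N) a b) := by
  unfold factorMul; exact factor_surjective _

lemma exact_lsmul_factorMul : Exact (lsmul (N := N) a b) (factorMul a b) := by
  intro x
  obtain ⟨y, rfl⟩ := mkQ_surjective _ x
  rw [mkQ_apply, factorMul_mk, Quotient.mk_eq_zero, mem_smul_top_iff_exists]
  constructor
  · rintro ⟨z, rfl⟩
    exact ⟨Submodule.Quotient.mk z, rfl⟩
  · rintro ⟨w, hw⟩
    obtain ⟨v, rfl⟩ := mkQ_surjective _ w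
    obtain ⟨z, hz⟩ := mem_smul_top_iff_exists.mp <| (Submodule.Quotient.eq _).mp hw.symm
    exact ⟨b • z + v, by simp [smul_add, ← mul_smul, hz]⟩

end QuotSMulTop

namespace RingTheory.Sequence.IsWeaklyRegular

variable {N : Type*} [AddCommGroup N] [Module R N]

lemma of_exact {N₁ N₂ : Type*} [AddCommGroup N₁] [AddCommGroup N₂] [Module R N₁] [Module R N₂]
    {f : N₁ →ₗ[R] N} {g : N →ₗ[R] N₂} (hf : Injective f) (hg : Surjective g)
    (hfg : Exact f g) {rs : List R} (h₁ : IsWeaklyRegular N₁ rs)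
    (h₂ : IsWeaklyRegular N₂ rs) : IsWeaklyRegular N rs := by
  induction rs generalizing N₁ N N₂ with
  | nil => exact .nil R N
  | cons r rs ih =>
    rw [isWeaklyRegular_cons_iff] at h₁ h₂ ⊢
    exact ⟨isSMulRegular_of_range_eq_ker hf (LinearMap.exact_iff.mp hfg).symm h₁.1 h₂.1,
      ih (QuotSMulTop.map_injective hf hfg h₂.1) (QuotSMulTop.map_surjective r hg)
        (QuotSMulTop.map_exact r hfg hg) h₁.2 h₂.2⟩

lemma mul_cons {a b : R} {rs : List R} (h₁ : IsWeaklyRegular N (a :: rs))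
    (h₂ : IsWeaklyRegular N (b :: rs)) : IsWeaklyRegular N (a * b :: rs) := by
  rw [isWeaklyRegular_cons_iff] at h₁ h₂ ⊢
  exact ⟨h₁.1.mul h₂.1, of_exact (QuotSMulTop.lsmul_injective h₁.1)
    QuotSMulTop.factorMul_surjective QuotSMulTop.exact_lsmul_factorMul h₂.2 h₁.2⟩

lemma set_mul {a b : R} {rs : List R} {i : ℕ} (h₁ : IsWeaklyRegular N (rs.set i a))
    (h₂ : IsWeaklyRegular N (rs.set i b)) : IsWeaklyRegular N (rs.set i (a * b)) := by
  induction rs generalizing N i with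
  | nil => exact .nil R N
  | cons r rs ih =>
    cases i with
    | zero => exact mul_cons h₁ h₂
    | succ i =>
      rw [List.set_cons_succ, isWeaklyRegular_cons_iff] at h₁ h₂ ⊢
      exact ⟨h₁.1, ih h₁.2 h₂.2⟩

end RingTheory.Sequence.IsWeaklyRegular

end

theorem stmt13_general (A : Type*) [CommRing A] (M : Type*) [AddCommGroup M] [Module A M]
    (as : List A) (i : ℕ) (a b : A)
    (h1 : RingTheory.Sequence.IsWeaklyRegular M (as.set i a))
    (h2 : RingTheory.Sequence.IsWeaklyRegular M (as.set i b)) :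
    RingTheory.Sequence.IsWeaklyRegular M (as.set i (a * b)) :=
  h1.set_mul h2

theorem stmt13 (A : Type*) [CommRing A] (M : Type*) [AddCommGroup M] [Module A M]
    (as : List A) (i : ℕ) (hi : i < as.length) (a b : A)
    (h1 : RingTheory.Sequence.IsWeaklyRegular M (as.set i a))
    (h2 : RingTheory.Sequence.IsWeaklyRegular M (as.set i b)) :
    RingTheory.Sequence.IsWeaklyRegular M (as.set i (a * b)) :=
  stmt13_general A M as i a b h1 h2
end

section
/- Let $\mathcal{T}$ be an $R$-linear triangulated category, $C, M \in \mathcal{T}$, and let $x_1, \ldots, x_t \in R$ be a weakly $(C,M)$-regular sequence (each $x_s$ is a non-zero divisor on $\mathrm{Hom}^*_{\mathcal{T}}(C, M /\!\!/ (x_1,\ldots,x_{s-1}))$). Then there is an isomorphism of graded $R$-modules $\mathrm{Hom}^*_{\mathcal{T}}(C, M)/(x_1, \ldots, x_t)\mathrm{Hom}^*_{\mathcal{T}}(C, M) \cong \mathrm{Hom}^*_{\mathcal{T}}(C, \Sigma^{-|x_1|-\cdots-|x_t|}(M /\!\!/ (x_1, \ldots, x_t)))$. -/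
open CategoryTheory Category Limits Pretriangulated

universe v u

variable (T : Type u) [Category.{v} T] [Preadditive T] [HasZeroObject T]
  [HasShift T ℤ] [∀ n : ℤ, (CategoryTheory.shiftFunctor T n).Additive] [Pretriangulated T]

/-!
STATEMENT 16: Let `x₁, …, x_t` be a weakly `(C, M)`-regular sequence of homogeneous
central elements (each `x_{s+1}` is a non-zero divisor on
`Hom^*_T(C, M ⫽ (x₁, …, x_s))`), where the iterated Koszul objects are the chosen
objects `K s` with `K 0 = M` and exact triangles
`K s ⟶ Σ^{|x_{s+1}|} K s ⟶ K (s+1) ⟶ Σ K s`.  Then for every degree `n` there is an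
isomorphism (of each graded piece, of graded `R`-modules)
`Hom^*_T(C, M)/(x₁, …, x_t)·Hom^*_T(C, M) ≅ Hom^*_T(C, Σ^{-|x₁|-⋯-|x_t|}(M ⫽ (x₁,…,x_t)))`;
the degree-`n` piece of the left-hand side is the quotient of `C⟦n⟧ ⟶ M` by the
subgroup generated by the `x_s`-multiples, and the corresponding piece of the
right-hand side is `C⟦n + |x₁| + ⋯ + |x_t|⟧ ⟶ K t`.
-/

/-!
Let `κ_t : M⟦|x₀| + ⋯ + |x_{t-1}|⟧ ⟶ M ⫽ (x₀, …, x_{t-1})` be the composite of the (shifted)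
second maps of the Koszul triangles. For every shift `Y` of `C`, the map
`f ↦ f⟦|x₀| + ⋯ + |x_{t-1}|⟧' ≫ κ_t` is surjective and its kernel is generated by the
`x_s`-multiples; this goes by induction on `t`. In the step, the `Hom(Y, -)` long exact sequence
of the triangle of `x_t`, together with the regularity of `x_t` at `Y` and at `Y⟦-1⟧`, shows that
`g_t` induces `Hom(Y, K_t⟦|x_t|⟧) / x_t ≅ Hom(Y⟦|x_t|⟧, K_{t+1})`. Central elements commute with
shifts up to the sign `(-1)^(|x| e)`, so the earlier stages carry `x_t`-multiples onto
`x_t`-multiples.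
-/

section Shift

variable {𝒞 : Type*} [Category 𝒞] [Preadditive 𝒞] [HasShift 𝒞 ℤ]

namespace CentralElement

variable {d : ℤ} (x : CentralElement 𝒞 d)

def CommutesWithShift (e : ℤ) (M : 𝒞) : Prop :=
  x.app (M⟦e⟧) = (d * e).negOnePow • ((x.app M)⟦e⟧' ≫ (shiftFunctorComm 𝒞 d e).hom.app M)

lemma commutesWithShift_one (M : 𝒞) : x.CommutesWithShift 1 M := by
  rw [CommutesWithShift, x.shift_comm, mul_one, Int.negOnePow_def, Units.smul_def]
  rfl

variable [∀ n : ℤ, (shiftFunctor 𝒞 n).Additive]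

-- Both sides are compared after transport along `M⟦a + b⟧ ≅ M⟦a⟧⟦b⟧`, where `hcoh` is the
-- coherence of `shiftFunctorComm` with `shiftFunctorAdd'`.
lemma commutesWithShift_add_iff {a b c : ℤ} (h : a + b = c) (M : 𝒞)
    (hb : x.CommutesWithShift b (M⟦a⟧)) :
    x.CommutesWithShift c M ↔ x.CommutesWithShift a M := by
  subst h
  have hα := (shiftFunctorAdd' 𝒞 a b (a + b) rfl).hom.naturality (x.app M)
  have hcoh : (shiftFunctorComm 𝒞 d (a + b)).hom.app M ≫
      ((shiftFunctorAdd' 𝒞 a b (a + b) rfl).hom.app M)⟦d⟧' =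
      (shiftFunctorAdd' 𝒞 a b (a + b) rfl).hom.app (M⟦d⟧) ≫
        ((shiftFunctorComm 𝒞 d a).hom.app M)⟦b⟧' ≫ (shiftFunctorComm 𝒞 d b).hom.app (M⟦a⟧) := by
    rw [shiftFunctorAdd'_eq_shiftFunctorAdd]
    exact shiftFunctorComm_hom_app_comp_shift_shiftFunctorAdd_hom_app d a b M
  rw [CommutesWithShift, ← cancel_mono (((shiftFunctorAdd' 𝒞 a b (a + b) rfl).hom.app M)⟦d⟧'),
    x.natural, Linear.units_smul_comp, assoc, hcoh, reassoc_of% hα, ← Linear.comp_units_smul,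
    cancel_epi]
  dsimp only [Functor.comp_obj]
  conv_rhs => rw [CommutesWithShift, ← (shiftFunctor 𝒞 b).map_injective.eq_iff,
    ← cancel_mono ((shiftFunctorComm 𝒞 d b).hom.app (M⟦a⟧)), Functor.map_units_smul,
    Linear.units_smul_comp]
  rw [hb, mul_add, Int.negOnePow_add, mul_comm (d * a).negOnePow, mul_smul, smul_left_cancel_iff]
  simp only [Functor.map_comp, assoc]

lemma commutesWithShift (e : ℤ) (M : 𝒞) : x.CommutesWithShift e M := by
  induction e using Int.induction_on generalizing M with
  | zero =>
    exact (x.commutesWithShift_add_iff (zero_add 1) M (x.commutesWithShift_one _)).mp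
      (x.commutesWithShift_one M)
  | succ e ih =>
    exact (x.commutesWithShift_add_iff rfl M (x.commutesWithShift_one _)).mpr (ih M)
  | pred e ih =>
    exact (x.commutesWithShift_add_iff (sub_add_cancel _ 1) M (x.commutesWithShift_one _)).mp
      (ih M)

lemma shift_map_app (e : ℤ) (M : 𝒞) :
    (x.app M)⟦e⟧' = (d * e).negOnePow • (x.app (M⟦e⟧) ≫ (shiftFunctorComm 𝒞 d e).inv.app M) := by
  rw [x.commutesWithShift e M, Linear.units_smul_comp, smul_smul, Int.units_mul_self, one_smul,
    assoc, Iso.hom_inv_id_app]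
  exact (comp_id _).symm

end CentralElement

namespace IsRegularOn

variable {d : ℤ} {x : CentralElement 𝒞 d} {C K : 𝒞}

lemma eq_zero_of_comp_eq_zero (hx : IsRegularOn 𝒞 x C K) {Y : 𝒞}
    (hY : (ObjectProperty.singleton C).shiftClosure ℤ Y) {f : Y ⟶ K}
    (hf : f ≫ x.app K = 0) : f = 0 := by
  obtain ⟨_, m, e, hC⟩ := hY
  obtain rfl := (ObjectProperty.singleton_iff _ _).mp hC
  rw [← cancel_epi e.inv, comp_zero]
  exact hx m _ (by rw [assoc, hf, comp_zero])

variable [∀ n : ℤ, (shiftFunctor 𝒞 n).Additive]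

lemma eq_zero_of_comp_shift_map_eq_zero (hx : IsRegularOn 𝒞 x C K) {Y : 𝒞}
    (hY : (ObjectProperty.singleton C).shiftClosure ℤ Y) {f : Y ⟶ K⟦(1 : ℤ)⟧}
    (hf : f ≫ (x.app K)⟦(1 : ℤ)⟧' = 0) : f = 0 := by
  let e := (shiftFunctorCompIsoId 𝒞 (-1 : ℤ) 1 (by norm_num)).app Y
  obtain ⟨f₀, hf₀⟩ := (shiftFunctor 𝒞 (1 : ℤ)).map_surjective (e.hom ≫ f)
  have hf₀_zero : f₀ = 0 := by
    refine hx.eq_zero_of_comp_eq_zero (ObjectProperty.le_shift _ (-1) Y hY)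
      ((shiftFunctor 𝒞 (1 : ℤ)).map_injective ?_)
    rw [Functor.map_comp, hf₀, assoc, hf, comp_zero, Functor.map_zero]
  rw [← cancel_epi e.hom, comp_zero, ← hf₀, hf₀_zero, Functor.map_zero]

end IsRegularOn

section Koszul

variable {d : ℕ → ℤ}

def sequenceMultiples (x : ∀ s : ℕ, CentralElement 𝒞 (d s)) (t : ℕ) (Y N : 𝒞) :
    AddSubgroup (Y ⟶ N) :=
  AddSubgroup.closure {f | ∃ s < t, ∃ w : Y⟦d s⟧ ⟶ N, f = (x s).app Y ≫ w}

lemma sequenceMultiples_mono {x : ∀ s : ℕ, CentralElement 𝒞 (d s)} {t t' : ℕ} (htt' : t ≤ t')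
    (Y N : 𝒞) : sequenceMultiples x t Y N ≤ sequenceMultiples x t' Y N :=
  AddSubgroup.closure_mono fun _ ⟨s, hs, w, hw⟩ => ⟨s, hs.trans_le htt', w, hw⟩

lemma app_comp_mem_sequenceMultiples (x : ∀ s : ℕ, CentralElement 𝒞 (d s)) {s t : ℕ}
    (hs : s < t) {Y N : 𝒞} (w : Y⟦d s⟧ ⟶ N) : (x s).app Y ≫ w ∈ sequenceMultiples x t Y N :=
  AddSubgroup.subset_closure ⟨s, hs, w, rfl⟩

variable {K : ℕ → 𝒞} (g : ∀ s : ℕ, (K s)⟦d s⟧ ⟶ K (s + 1))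

def koszulMap : ∀ t : ℕ, (K 0)⟦∑ s ∈ Finset.range t, d s⟧ ⟶ K t
  | 0 => (shiftFunctorZero' 𝒞 _ (Finset.sum_range_zero d)).hom.app (K 0)
  | t + 1 => (shiftFunctorAdd' 𝒞 _ (d t) _ (Finset.sum_range_succ d t).symm).hom.app (K 0) ≫
      (koszulMap t)⟦d t⟧' ≫ g t

variable [∀ n : ℤ, (shiftFunctor 𝒞 n).Additive]

def koszulHom (t : ℕ) (Y : 𝒞) : (Y ⟶ K 0) →+ (Y⟦∑ s ∈ Finset.range t, d s⟧ ⟶ K t) :=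
  (Preadditive.rightComp _ (koszulMap g t)).comp (shiftFunctor 𝒞 _).mapAddHom

lemma koszulHom_apply (t : ℕ) {Y : 𝒞} (f : Y ⟶ K 0) :
    koszulHom g t Y f = f⟦∑ s ∈ Finset.range t, d s⟧' ≫ koszulMap g t := rfl

lemma koszulHom_zero_apply {Y : 𝒞} (f : Y ⟶ K 0) :
    koszulHom g 0 Y f = (shiftFunctorZero' 𝒞 _ (Finset.sum_range_zero d)).hom.app Y ≫ f :=
  (shiftFunctorZero' 𝒞 _ (Finset.sum_range_zero d)).hom.naturality f

lemma koszulHom_succ_apply (t : ℕ) {Y : 𝒞} (f : Y ⟶ K 0) :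
    koszulHom g (t + 1) Y f =
      (shiftFunctorAdd' 𝒞 _ (d t) _ (Finset.sum_range_succ d t).symm).hom.app Y ≫
        (koszulHom g t Y f)⟦d t⟧' ≫ g t := by
  rw [koszulHom_apply, koszulHom_apply, koszulMap, Functor.map_comp,
    NatTrans.naturality_assoc]
  simp only [Functor.comp_map, assoc]

lemma koszulHom_app_comp {e : ℤ} (x : CentralElement 𝒞 e) (t : ℕ) {Y : 𝒞} (w : Y⟦e⟧ ⟶ K 0) :
    koszulHom g t Y (x.app Y ≫ w) = x.app (Y⟦∑ s ∈ Finset.range t, d s⟧) ≫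
      ((e * ∑ s ∈ Finset.range t, d s).negOnePow •
        ((shiftFunctorComm 𝒞 e _).inv.app Y ≫ koszulHom g t (Y⟦e⟧) w)) := by
  rw [koszulHom_apply, koszulHom_apply, Functor.map_comp, x.shift_map_app]
  simp only [Linear.units_smul_comp, Linear.comp_units_smul, assoc]

lemma ker_koszulHom_le_succ (t : ℕ) (Y : 𝒞) :
    (koszulHom g t Y).ker ≤ (koszulHom g (t + 1) Y).ker := fun f hf => by
  rw [AddMonoidHom.mem_ker] at hf ⊢
  rw [koszulHom_succ_apply, hf, Functor.map_zero, zero_comp, comp_zero]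

end Koszul

end Shift

section KoszulTriangle

variable {T} {d : ℤ} {x : CentralElement T d} {C K K' : T} {g : K⟦d⟧ ⟶ K'} {h : K' ⟶ K⟦(1 : ℤ)⟧}

lemma exists_shift_map_comp_eq (hT : Triangle.mk (x.app K) g h ∈ distTriang T)
    (hx : IsRegularOn T x C K) {Y : T} (hY : (ObjectProperty.singleton C).shiftClosure ℤ Y)
    (u : Y⟦d⟧ ⟶ K') : ∃ v : Y ⟶ K, v⟦d⟧' ≫ g = u := by
  have hu : u ≫ h = 0 := by
    refine hx.eq_zero_of_comp_shift_map_eq_zero (ObjectProperty.le_shift _ d Y hY) ?_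
    have h₃₁ : h ≫ (x.app K)⟦(1 : ℤ)⟧' = 0 := comp_distTriang_mor_zero₃₁ _ hT
    rw [assoc, h₃₁, comp_zero]
  obtain ⟨w, rfl⟩ := Triangle.coyoneda_exact₃ _ hT u hu
  obtain ⟨v, rfl⟩ := (shiftFunctor T d).map_surjective w
  exact ⟨v, rfl⟩

lemma app_comp_shift_map_comp_eq_zero (hT : Triangle.mk (x.app K) g h ∈ distTriang T) {Y : T}
    (w : Y⟦d⟧ ⟶ K) : (x.app Y ≫ w)⟦d⟧' ≫ g = 0 := by
  simp only [Functor.map_comp, x.shift_map_app, shiftFunctorComm_eq_refl, Iso.refl_inv,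
    NatTrans.id_app, Functor.comp_obj, comp_id]
  have h₁₂ : x.app K ≫ g = 0 := comp_distTriang_mor_zero₁₂ _ hT
  rw [Linear.units_smul_comp, Linear.units_smul_comp, x.natural, assoc, h₁₂, comp_zero,
    smul_zero]

lemma shift_map_comp_eq_zero_iff (hT : Triangle.mk (x.app K) g h ∈ distTriang T)
    (hx : IsRegularOn T x C K) {Y : T} (hY : (ObjectProperty.singleton C).shiftClosure ℤ Y)
    (v : Y ⟶ K) : v⟦d⟧' ≫ g = 0 ↔ ∃ w : Y⟦d⟧ ⟶ K, v = x.app Y ≫ w := by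
  refine ⟨fun hv => ?_, fun ⟨w, hw⟩ => hw ▸ app_comp_shift_map_comp_eq_zero hT w⟩
  obtain ⟨w, hw⟩ : ∃ w : Y⟦d⟧ ⟶ K, v⟦d⟧' = w ≫ x.app K :=
    Triangle.coyoneda_exact₂ _ hT (v⟦d⟧') hv
  refine ⟨w, sub_eq_zero.mp (hx.eq_zero_of_comp_eq_zero hY ?_)⟩
  rw [Preadditive.sub_comp, ← x.natural, assoc, ← hw, sub_self]

end KoszulTriangle

section KoszulIteration

variable {T} {d : ℕ → ℤ} {K : ℕ → T} (g : ∀ s : ℕ, (K s)⟦d s⟧ ⟶ K (s + 1))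
  {x : ∀ s : ℕ, CentralElement T (d s)} {h : ∀ s : ℕ, K (s + 1) ⟶ (K s)⟦(1 : ℤ)⟧} {C : T}

lemma koszulHom_surjective {t : ℕ}
    (ht : ∀ s < t, Triangle.mk ((x s).app (K s)) (g s) (h s) ∈ distTriang T)
    (hreg : ∀ s < t, IsRegularOn T (x s) C (K s)) {Y : T}
    (hY : (ObjectProperty.singleton C).shiftClosure ℤ Y) :
    Function.Surjective (koszulHom g t Y) := by
  induction t with
  | zero =>
    intro u
    exact ⟨(shiftFunctorZero' T _ (Finset.sum_range_zero d)).inv.app Y ≫ u, by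
      rw [koszulHom_zero_apply, Iso.hom_inv_id_app_assoc]⟩
  | succ t ih =>
    intro u
    obtain ⟨v, hv⟩ := exists_shift_map_comp_eq (ht t t.lt_succ_self) (hreg t t.lt_succ_self)
      (ObjectProperty.le_shift _ _ Y hY)
      ((shiftFunctorAdd' T _ (d t) _ (Finset.sum_range_succ d t).symm).inv.app Y ≫ u)
    obtain ⟨f, rfl⟩ := ih (fun s hs => ht s (hs.trans t.lt_succ_self))
      (fun s hs => hreg s (hs.trans t.lt_succ_self)) v
    exact ⟨f, by rw [koszulHom_succ_apply, hv, Iso.hom_inv_id_app_assoc]⟩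

lemma app_comp_mem_ker_koszulHom_succ {s : ℕ}
    (hs : Triangle.mk ((x s).app (K s)) (g s) (h s) ∈ distTriang T) {Y : T}
    (w : Y⟦d s⟧ ⟶ K 0) : (x s).app Y ≫ w ∈ (koszulHom g (s + 1) Y).ker := by
  rw [AddMonoidHom.mem_ker, koszulHom_succ_apply, koszulHom_app_comp,
    app_comp_shift_map_comp_eq_zero hs, comp_zero]

lemma sequenceMultiples_le_ker_koszulHom {t : ℕ}
    (ht : ∀ s < t, Triangle.mk ((x s).app (K s)) (g s) (h s) ∈ distTriang T) (Y : T) :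
    sequenceMultiples x t Y (K 0) ≤ (koszulHom g t Y).ker := by
  rw [sequenceMultiples, AddSubgroup.closure_le]
  rintro _ ⟨s, hs, w, rfl⟩
  exact monotone_nat_of_le_succ (fun t => ker_koszulHom_le_succ g t Y) hs
    (app_comp_mem_ker_koszulHom_succ g (ht s hs) w)

lemma ker_koszulHom_le_sequenceMultiples {t : ℕ}
    (ht : ∀ s < t, Triangle.mk ((x s).app (K s)) (g s) (h s) ∈ distTriang T)
    (hreg : ∀ s < t, IsRegularOn T (x s) C (K s)) {Y : T}
    (hY : (ObjectProperty.singleton C).shiftClosure ℤ Y) :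
    (koszulHom g t Y).ker ≤ sequenceMultiples x t Y (K 0) := by
  induction t with
  | zero =>
    intro f hf
    rw [AddMonoidHom.mem_ker, koszulHom_zero_apply, ← comp_zero, cancel_epi] at hf
    rw [hf]
    exact zero_mem _
  | succ t ih =>
    have ht' : ∀ s < t, _ := fun s hs => ht s (hs.trans t.lt_succ_self)
    have hreg' : ∀ s < t, _ := fun s hs => hreg s (hs.trans t.lt_succ_self)
    intro f hf
    rw [AddMonoidHom.mem_ker, koszulHom_succ_apply, ← comp_zero, cancel_epi] at hf
    obtain ⟨w, hw⟩ := (shift_map_comp_eq_zero_iff (ht t t.lt_succ_self) (hreg t t.lt_succ_self)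
      (ObjectProperty.le_shift _ _ Y hY) _).mp hf
    -- Correcting `w` by the shift commutator, it is the image of some `w₀` one stage earlier.
    obtain ⟨w₀, hw₀⟩ := koszulHom_surjective g ht' hreg' (ObjectProperty.le_shift _ (d t) Y hY)
      ((d t * ∑ s ∈ Finset.range t, d s).negOnePow • ((shiftFunctorComm T (d t) _).hom.app Y ≫ w))
    have hf₀ : koszulHom g t Y ((x t).app Y ≫ w₀) = koszulHom g t Y f := by
      rw [koszulHom_app_comp, hw₀, hw]
      simp only [Linear.comp_units_smul, Iso.inv_hom_id_app_assoc, smul_smul,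
        Int.units_mul_self, one_smul]
    have hdiff : f - (x t).app Y ≫ w₀ ∈ sequenceMultiples x t Y (K 0) :=
      ih ht' hreg' (by rw [AddMonoidHom.mem_ker, map_sub, hf₀, sub_self])
    simpa using add_mem (sequenceMultiples_mono t.le_succ Y (K 0) hdiff)
      (app_comp_mem_sequenceMultiples x t.lt_succ_self w₀)

lemma ker_koszulHom {t : ℕ}
    (ht : ∀ s < t, Triangle.mk ((x s).app (K s)) (g s) (h s) ∈ distTriang T)
    (hreg : ∀ s < t, IsRegularOn T (x s) C (K s)) {Y : T}
    (hY : (ObjectProperty.singleton C).shiftClosure ℤ Y) :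
    (koszulHom g t Y).ker = sequenceMultiples x t Y (K 0) :=
  le_antisymm (ker_koszulHom_le_sequenceMultiples g ht hreg hY)
    (sequenceMultiples_le_ker_koszulHom g ht Y)

end KoszulIteration

theorem stmt16 (t : ℕ) (d : ℕ → ℤ) (x : ∀ s : ℕ, CentralElement T (d s))
    (C M : T) (K : ℕ → T) (hK0 : K 0 = M)
    (g : ∀ s : ℕ, (K s)⟦d s⟧ ⟶ K (s + 1)) (h : ∀ s : ℕ, K (s + 1) ⟶ (K s)⟦(1:ℤ)⟧)
    (ht : ∀ s < t, Triangle.mk ((x s).app (K s)) (g s) (h s) ∈ distTriang T)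
    (hreg : ∀ s < t, IsRegularOn T (x s) C (K s)) :
    ∀ n : ℤ, Nonempty
      (((C⟦n⟧ ⟶ M) ⧸ AddSubgroup.closure
          {f : C⟦n⟧ ⟶ M | ∃ s < t, ∃ f' : C⟦n + d s⟧ ⟶ M,
            f = (x s).app (C⟦n⟧) ≫
              (shiftFunctorAdd' T n (d s) (n + d s) rfl).inv.app C ≫ f'}) ≃+
        (C⟦n + ∑ s ∈ Finset.range t, d s⟧ ⟶ K t)) := by
  intro n
  subst hK0
  have hY : (ObjectProperty.singleton C).shiftClosure ℤ (C⟦n⟧) :=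
    ⟨C, n, Iso.refl _, (ObjectProperty.singleton_iff C C).mpr rfl⟩
  have hker : AddSubgroup.closure {f : C⟦n⟧ ⟶ K 0 | ∃ s < t, ∃ f' : C⟦n + d s⟧ ⟶ K 0,
      f = (x s).app (C⟦n⟧) ≫ (shiftFunctorAdd' T n (d s) (n + d s) rfl).inv.app C ≫ f'} =
      (koszulHom g t (C⟦n⟧)).ker := by
    rw [ker_koszulHom g ht hreg hY, sequenceMultiples]
    congr 1
    ext f
    constructor
    · rintro ⟨s, hs, f', rfl⟩
      exact ⟨s, hs, _, rfl⟩
    · rintro ⟨s, hs, w, rfl⟩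
      exact ⟨s, hs, (shiftFunctorAdd' T n (d s) (n + d s) rfl).hom.app C ≫ w, by
        rw [Iso.inv_hom_id_app_assoc]⟩
  rw [hker]
  exact ⟨(QuotientAddGroup.quotientKerEquivOfSurjective _ (koszulHom_surjective g ht hreg hY)).trans
    (Linear.homCongr ℤ ((shiftFunctorAdd' T n _ _ rfl).app C).symm (Iso.refl _)).toAddEquiv⟩
end

section
/- Let $\mathcal{T}$ be an $R$-linear triangulated category, $M \in \mathcal{T}$, and $x \in R$ an $M$-productive element (i.e. $x$ acts as zero on $M /\!\!/ x^k$ for all relevant powers via productivity of powers). If $x$ is $(M,M)$-regular ($x$ is a non-zero divisor on $\mathrm{End}^*_{\mathcal{T}}(M)$ and $M /\!\!/ x \neq 0$), then for every $n \geq 1$ the morphism $x^{n-1}(M /\!\!/ x^n) \colon M /\!\!/ x^n \to \Sigma^{(n-1)|x|}(M /\!\!/ x^n)$ is non-zero. -/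
/-!
Suppose `x^{n-1}` kills `M ⫽ xⁿ`. By naturality `x^{n-1}(M⟦n|x|⟧)` then dies in the shift of
`M ⫽ xⁿ`, so it factors through `Σ^{(n-1)|x|} xⁿ(M)`, and regularity of `xⁿ` on
`End^*(M)` turns this into `x^{n-1}(M) = xⁿ(M) ≫ w`. As `xⁿ(M) = x^{n-1}(M) ≫ Σ^{(n-1)|x|} x(M)`,
we get `xⁿ(M) ≫ (1 - w ≫ Σ^{(n-1)|x|} x(M)) = 0`, so `w` is a section of `Σ^{(n-1)|x|} x(M)` by
regularity of `xⁿ`, hence its inverse by regularity of `x`. Thus `x(M)` is an isomorphism and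
`M ⫽ x = 0`.
-/

open CategoryTheory Category Limits Pretriangulated

universe v u

variable (T : Type u) [Category.{v} T] [Preadditive T] [HasZeroObject T]
  [HasShift T ℤ] [∀ n : ℤ, (CategoryTheory.shiftFunctor T n).Additive] [Pretriangulated T]

lemma isIso_of_comp_eq_id {𝒞 : Type*} [Category 𝒞] [Preadditive 𝒞] {B C : 𝒞} {a : B ⟶ C}
    (ha : ∀ f : B ⟶ B, f ≫ a = 0 → f = 0) {w : C ⟶ B} (hw : w ≫ a = 𝟙 C) : IsIso a := by
  refine ⟨w, ?_, hw⟩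
  rw [← sub_eq_zero]
  exact ha _ (by rw [Preadditive.sub_comp, assoc, hw, comp_id, id_comp, sub_self])

section

variable {𝒯 : Type*} [Category 𝒯] [Preadditive 𝒯] [HasShift 𝒯 ℤ]

def IsHomInjective (C : 𝒯) {A B : 𝒯} (y : A ⟶ B) : Prop :=
  ∀ (n : ℤ) (f : C⟦n⟧ ⟶ A), f ≫ y = 0 → f = 0

namespace IsHomInjective

variable {C A B : 𝒯} {y : A ⟶ B}

lemma eq_zero (hy : IsHomInjective C y) {f : C ⟶ A} (hf : f ≫ y = 0) : f = 0 := by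
  have : (shiftFunctorZero 𝒯 ℤ).hom.app C ≫ f = 0 := hy 0 _ (by rw [assoc, hf, comp_zero])
  rwa [Preadditive.IsIso.comp_left_eq_zero] at this

lemma comp {D : 𝒯} {z : B ⟶ D} (hy : IsHomInjective C y) (hz : IsHomInjective C z) :
    IsHomInjective C (y ≫ z) :=
  fun n f hf => hy n f (hz n (f ≫ y) (by rwa [assoc]))

lemma of_isIso [IsIso y] : IsHomInjective C y :=
  fun _ f hf => (Preadditive.IsIso.comp_right_eq_zero f y).1 hf

lemma shift (hy : IsHomInjective C y) (s : ℤ) : IsHomInjective C (y⟦s⟧') := by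
  intro j f hf
  let e := (shiftFunctorAdd' 𝒯 (j - s) s j (by ring)).app C
  have hψ : (shiftFunctor 𝒯 s).preimage (e.inv ≫ f) = 0 := by
    refine hy _ _ ((shiftFunctor 𝒯 s).map_injective ?_)
    rw [Functor.map_comp, Functor.map_preimage, Functor.map_zero, assoc, hf, comp_zero]
  have h := (shiftFunctor 𝒯 s).map_preimage (e.inv ≫ f)
  rw [hψ, Functor.map_zero] at h
  exact (Preadditive.IsIso.comp_left_eq_zero _ _).1 h.symm

end IsHomInjective

namespace CentralElement

variable {m : ℤ}

lemma exists_app_eq_comp_shift_mor₁ [HasZeroObject 𝒯] [∀ n : ℤ, (shiftFunctor 𝒯 n).Additive]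
    [Pretriangulated 𝒯] (P : CentralElement 𝒯 m) {τ : Triangle 𝒯}
    (hτ : τ ∈ distTriang 𝒯) (hP : P.app τ.obj₃ = 0) :
    ∃ w : τ.obj₂ ⟶ τ.obj₁⟦m⟧, P.app τ.obj₂ = w ≫ τ.mor₁⟦m⟧' := by
  have hτm : Triangle.mk (m.negOnePow • τ.mor₁⟦m⟧') (m.negOnePow • τ.mor₂⟦m⟧')
      (m.negOnePow • τ.mor₃⟦m⟧' ≫ (shiftFunctorComm 𝒯 1 m).hom.app τ.obj₁) ∈ distTriang 𝒯 :=
    Triangle.shift_distinguished τ hτ m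
  obtain ⟨w, hw⟩ : ∃ w : τ.obj₂ ⟶ τ.obj₁⟦m⟧, P.app τ.obj₂ = w ≫ (m.negOnePow • τ.mor₁⟦m⟧') :=
    Triangle.coyoneda_exact₂ _ hτm (P.app τ.obj₂) (by
      change P.app τ.obj₂ ≫ (m.negOnePow • τ.mor₂⟦m⟧') = 0
      rw [Linear.comp_units_smul, P.natural, hP, comp_zero, smul_zero])
  refine ⟨m.negOnePow • w, ?_⟩
  rw [hw, Linear.comp_units_smul, Linear.units_smul_comp]

lemma app_eq_comp_of_app_eq_comp_shift (P : CentralElement 𝒯 m) {M N : 𝒯} {X : M ⟶ N}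
    (hX : IsHomInjective M X) {w : N ⟶ M⟦m⟧} (hw : P.app N = w ≫ X⟦m⟧') :
    P.app M = X ≫ w := by
  rw [← sub_eq_zero]
  refine (hX.shift m).eq_zero ?_
  rw [Preadditive.sub_comp, P.natural, hw, assoc, sub_self]

lemma exists_app_eq_mor₁_comp [HasZeroObject 𝒯] [∀ n : ℤ, (shiftFunctor 𝒯 n).Additive]
    [Pretriangulated 𝒯] (P : CentralElement 𝒯 m) {τ : Triangle 𝒯}
    (hτ : τ ∈ distTriang 𝒯) (hP : P.app τ.obj₃ = 0) (hmor₁ : IsHomInjective τ.obj₁ τ.mor₁) :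
    ∃ w : τ.obj₂ ⟶ τ.obj₁⟦m⟧, P.app τ.obj₁ = τ.mor₁ ≫ w :=
  (P.exists_app_eq_comp_shift_mor₁ hτ hP).imp fun _ hw =>
    P.app_eq_comp_of_app_eq_comp_shift hmor₁ hw

lemma eq_zero_of_app_comp_eq_zero (P : CentralElement 𝒯 m) {M N : 𝒯}
    (hP : IsHomInjective M (P.app N)) {u : M⟦m⟧ ⟶ N⟦m⟧} (hu : P.app M ≫ u = 0) : u = 0 := by
  rw [← (shiftFunctor 𝒯 m).map_preimage u] at hu ⊢
  rw [P.natural] at hu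
  rw [hP.eq_zero hu, Functor.map_zero]

end CentralElement

variable {d : ℤ} (x : CentralElement 𝒯 d) (xpow : ∀ n : ℕ, CentralElement 𝒯 ((n : ℤ) * d))

lemma pow_succ_app_eq {n : ℕ} {M : 𝒯} (hpow : (xpow (n + 1)).app M =
      x.app M ≫ (xpow n).app (M⟦d⟧) ≫
        (shiftFunctorAdd' 𝒯 d ((n : ℤ) * d) (((n + 1 : ℕ) : ℤ) * d)
          (by push_cast; ring)).inv.app M) :
    (xpow (n + 1)).app M = (xpow n).app M ≫ (x.app M)⟦(n : ℤ) * d⟧' ≫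
        (shiftFunctorAdd' 𝒯 d ((n : ℤ) * d) (((n + 1 : ℕ) : ℤ) * d)
          (by push_cast; ring)).inv.app M := by
  rw [hpow, ← assoc, ← (xpow n).natural, assoc]

lemma isHomInjective_pow_succ_app {C M : 𝒯}
    (hx1 : (xpow 1).app M = x.app M ≫ eqToHom (by rw [Nat.cast_one, one_mul]))
    (hpow : ∀ n : ℕ, (xpow (n + 1)).app M =
      x.app M ≫ (xpow n).app (M⟦d⟧) ≫
        (shiftFunctorAdd' 𝒯 d ((n : ℤ) * d) (((n + 1 : ℕ) : ℤ) * d)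
          (by push_cast; ring)).inv.app M)
    (hx : IsHomInjective C (x.app M)) (n : ℕ) : IsHomInjective C ((xpow (n + 1)).app M) := by
  induction n with
  | zero => rw [hx1]; exact hx.comp .of_isIso
  | succ n ih =>
    rw [pow_succ_app_eq x xpow (hpow (n + 1))]
    exact ih.comp ((hx.shift _).comp .of_isIso)

end

theorem stmt18 {d : ℤ} (x : CentralElement T d)
    (xpow : ∀ n : ℕ, CentralElement T ((n : ℤ) * d))
    (hx1 : ∀ M : T, (xpow 1).app M = x.app M ≫ eqToHom (by rw [Nat.cast_one, one_mul]))
    (hpow : ∀ (n : ℕ) (M : T), (xpow (n + 1)).app M =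
      x.app M ≫ (xpow n).app (M⟦d⟧) ≫
        (shiftFunctorAdd' T d ((n : ℤ) * d) (((n + 1 : ℕ) : ℤ) * d)
          (by push_cast; ring)).inv.app M)
    (M : T) (K : ℕ → T)
    (g : ∀ n : ℕ, M⟦(n : ℤ) * d⟧ ⟶ K n) (h : ∀ n : ℕ, K n ⟶ M⟦(1:ℤ)⟧)
    (ht : ∀ n : ℕ, 1 ≤ n → Triangle.mk ((xpow n).app M) (g n) (h n) ∈ distTriang T)
    (hreg : IsRegularOn T x M M)
    (hnz : ¬ IsZero (K 1)) :
    ∀ n : ℕ, 1 ≤ n → (xpow (n - 1)).app (K n) ≠ 0 := by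
  intro n hn hzero
  obtain ⟨k, rfl⟩ := Nat.exists_eq_add_of_le' hn
  rw [Nat.add_sub_cancel] at hzero
  have hx : IsHomInjective M (x.app M) := hreg
  have hX := isHomInjective_pow_succ_app x xpow (hx1 M) (fun n => hpow n M) hx k
  set c := (shiftFunctorAdd' T d ((k : ℤ) * d) (((k + 1 : ℕ) : ℤ) * d)
    (by push_cast; ring)).inv.app M
  obtain ⟨w, hw⟩ : ∃ w : M⟦((k + 1 : ℕ) : ℤ) * d⟧ ⟶ M⟦(k : ℤ) * d⟧,
      (xpow k).app M = (xpow (k + 1)).app M ≫ w :=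
    (xpow k).exists_app_eq_mor₁_comp (ht (k + 1) hn) hzero hX
  have hsection : w ≫ (x.app M)⟦(k : ℤ) * d⟧' ≫ c = 𝟙 _ := by
    refine (sub_eq_zero.1 ((xpow (k + 1)).eq_zero_of_app_comp_eq_zero hX ?_)).symm
    rw [Preadditive.comp_sub, comp_id, ← assoc, ← hw, ← pow_succ_app_eq x xpow (hpow k M),
      sub_self]
  have : IsIso ((x.app M)⟦(k : ℤ) * d⟧' ≫ c) :=
    isIso_of_comp_eq_id (fun f hf => ((hx.shift _).comp .of_isIso) _ f hf) hsection
  have : IsIso ((x.app M)⟦(k : ℤ) * d⟧') := IsIso.of_isIso_comp_right _ c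
  have : IsIso (x.app M) := isIso_of_reflects_iso _ (shiftFunctor T ((k : ℤ) * d))
  exact hnz (Triangle.isZero₃_of_isIso₁ _ (ht 1 le_rfl) (by
    change IsIso ((xpow 1).app M); rw [hx1]; infer_instance))
end
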